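/- Let P[i..j] be an f-MEM of P with respect to T that contains no complete phrase of PFP(P) and is contained within a single phrase PFP(P)[a] that occurs at least f times in PFP(T). Then PFP(P)[a] is part of an f-MEM of PFP(P) with respect to PFP(T), and P[i..j] is contained in the pseudo-MEM corresponding to the phrase sequence in S_1 arising from that f-MEM of the parse. -/

import Mathlib

/-- The substring of `S` at 0-indexed closed positions `[i..j]`. -/
def strSub {α : Type*} (S : List α) (i j : ℕ) : List α := (S.drop i).take (j + 1 - i)

/-- `S` occurs as a contiguous substring of `X` at 0-indexed position `p`. -/
def occursAt {α : Type*} (S X : List α) (p : ℕ) : Prop :=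
  p + S.length ≤ X.length ∧ (X.drop p).take S.length = S

/-- The number of occurrences of `S` as a contiguous substring of `X`. -/
def occCount {α : Type*} [DecidableEq α] (S X : List α) : ℕ :=
  ((Finset.range (X.length + 1)).filter
    (fun p => p + S.length ≤ X.length ∧ (X.drop p).take S.length = S)).card

/-- `P[i..j]` (0-indexed, closed) is an `f`-MEM of `P` with respect to `T`. -/
def IsMEM {α : Type*} [DecidableEq α] (f : ℕ) (P T : List α) (i j : ℕ) : Prop :=
  i ≤ j ∧ j < P.length ∧ f ≤ occCount (strSub P i j) T ∧
  (i = 0 ∨ occCount (strSub P (i - 1) j) T < f) ∧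
  (j + 1 = P.length ∨ occCount (strSub P i (j + 1)) T < f)

/-- The trigger positions of `S` under window width `w` and trigger predicate `h`:
positions `q` with `w ≤ q ≤ |S|` such that `h` holds of the `w` characters ending at
(1-indexed) position `q`. -/
def pfpTriggers {α : Type*} (w : ℕ) (h : List α → Bool) (S : List α) : List ℕ :=
  (List.range (S.length + 1)).filter (fun q => decide (w ≤ q) && h ((S.drop (q - w)).take w))

/-- 0-indexed starting positions of the phrases of the prefix-free parse of `S`. -/
def pfpStarts {α : Type*} (w : ℕ) (h : List α → Bool) (S : List α) : List ℕ :=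
  0 :: (pfpTriggers w h S).map (fun q => q - w)

/-- Exclusive ending positions of the phrases of the prefix-free parse of `S`. -/
def pfpEnds {α : Type*} (w : ℕ) (h : List α → Bool) (S : List α) : List ℕ :=
  pfpTriggers w h S ++ [S.length]

/-- The prefix-free parse of `S`, as the list of its phrases. -/
def PFP {α : Type*} (w : ℕ) (h : List α → Bool) (S : List α) : List (List α) :=
  ((pfpStarts w h S).zip (pfpEnds w h S)).map (fun se => (S.drop se.1).take (se.2 - se.1))

/-- The starting position in `S` of phrase `i` (0-indexed) of `PFP(S)`. -/
def pfpStart {α : Type*} (w : ℕ) (h : List α → Bool) (S : List α) (i : ℕ) : ℕ :=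
  (pfpStarts w h S).getD i 0

/-- The exclusive ending position in `S` of phrase `j` (0-indexed) of `PFP(S)`. -/
def pfpEnd {α : Type*} (w : ℕ) (h : List α → Bool) (S : List α) (j : ℕ) : ℕ :=
  (pfpEnds w h S).getD j 0

/-- The substring of `S` that becomes the phrase sequence `PFP(S)[i..j]` (0-indexed):
from the first character of phrase `i` to the last character of phrase `j`. -/
def pfpBecomes {α : Type*} (w : ℕ) (h : List α → Bool) (S : List α) (i j : ℕ) : List α :=
  (S.drop (pfpStart w h S i)).take (pfpEnd w h S j - pfpStart w h S i)

/-- The pair `(l, r)` of 0-indexed phrase positions delimits a phrase sequence in `S₁`: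
`PFP(P)[l..r]` is obtained from an `f`-MEM `PFP(P)[i..j]` of `PFP(P)` with respect to
`PFP(T)` by extending one phrase in each direction where possible. -/
def inS1 {α : Type*} [DecidableEq α] (w f : ℕ) (h : List α → Bool) (P T : List α)
    (l r : ℕ) : Prop :=
  ∃ i j, IsMEM f (PFP w h P) (PFP w h T) i j ∧
    l = i - 1 ∧ r = min (j + 1) ((PFP w h P).length - 1)

/-- The pair `(l, r)` of 0-indexed phrase positions delimits a phrase sequence in `S₂`:
`r = l + 1` and neither phrase `PFP(P)[l]` nor phrase `PFP(P)[l+1]` occurs in `PFP(T)`. -/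
def inS2 {α : Type*} [DecidableEq α] (w : ℕ) (h : List α → Bool) (P T : List α)
    (l r : ℕ) : Prop :=
  r = l + 1 ∧ l + 1 < (PFP w h P).length ∧
  (PFP w h P).getD l [] ∉ PFP w h T ∧ (PFP w h P).getD (l + 1) [] ∉ PFP w h T

/-! The phrase `PFP(P)[a]` occurs at least `f` times in `PFP(T)`, so it can be extended
greedily, first to the right and then to the left, to a maximal phrase sequence occurring
at least `f` times: an `f`-MEM of the parse containing `a`. Occurrence counts can only grow
when passing to an infix, so the left extension keeps the right end maximal. Phrase starts
and ends are nondecreasing along the parse, hence the substring of `P` spanned by this MEM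
widened by one phrase on each side still contains phrase `a`, and with it `P[i..j]`. -/

section
variable {α : Type*}

lemma Nat.exists_le_maximal_of_le {p : ℕ → Prop} {a n : ℕ} (ha : a ≤ n) (hp : p a) :
    ∃ k, a ≤ k ∧ k ≤ n ∧ p k ∧ (k = n ∨ ¬ p (k + 1)) := by
  classical
  refine ⟨Nat.findGreatest p n, Nat.le_findGreatest ha hp, Nat.findGreatest_le n,
    Nat.findGreatest_spec ha hp, ?_⟩
  by_cases hn : Nat.findGreatest p n = n
  · exact .inl hn
  · exact .inr (Nat.findGreatest_is_greatest (Nat.lt_succ_self _)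
      (Nat.lt_of_le_of_ne (Nat.findGreatest_le n) hn))

lemma Nat.exists_le_minimal {p : ℕ → Prop} {a : ℕ} (hp : p a) :
    ∃ k ≤ a, p k ∧ (k = 0 ∨ ¬ p (k - 1)) := by
  classical
  refine ⟨Nat.find ⟨a, hp⟩, Nat.find_min' _ hp, Nat.find_spec ⟨a, hp⟩, ?_⟩
  rcases Nat.eq_zero_or_pos (Nat.find ⟨a, hp⟩) with hk | hk
  · exact .inl hk
  · exact .inr (Nat.find_min _ (Nat.sub_lt hk Nat.one_pos))

lemma List.Pairwise.getD_le_getD [Preorder α] {l : List α} (hl : l.Pairwise (· ≤ ·)) (d : α)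
    {k k' : ℕ} (hk : k ≤ k') (hk' : k' < l.length) : l.getD k d ≤ l.getD k' d := by
  rw [List.getD_eq_getElem _ _ (hk.trans_lt hk'), List.getD_eq_getElem _ _ hk']
  exact hl.rel_get_of_le (a := ⟨k, hk.trans_lt hk'⟩) (b := ⟨k', hk'⟩) hk

lemma strSub_self (S : List α) (d : α) {a : ℕ} (ha : a < S.length) :
    strSub S a a = [S.getD a d] := by
  rw [strSub, Nat.add_sub_cancel_left, List.drop_eq_getElem_cons ha, List.getD_eq_getElem _ _ ha]
  rfl

lemma strSub_isInfix_strSub (S : List α) {i' i j j' : ℕ} (hi : i' ≤ i) (hj : j ≤ j') :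
    strSub S i j <:+: strSub S i' j' := by
  have hdrop : strSub S i j' = (strSub S i' j').drop (i - i') := by
    rw [strSub, strSub, List.drop_take, List.drop_drop, Nat.add_sub_cancel' hi, Nat.sub_sub,
      Nat.add_sub_cancel' hi]
  exact (List.take_prefix_take_left (by omega)).isInfix.trans
    (hdrop ▸ List.drop_suffix _ _).isInfix

lemma occCount_le_occCount_of_isInfix [DecidableEq α] {S B : List α} (X : List α)
    (hSB : S <:+: B) : occCount B X ≤ occCount S X := by
  obtain ⟨s, t, rfl⟩ := hSB
  unfold occCount
  refine Finset.card_le_card_of_injOn (· + s.length) (fun p hp => ?_)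
    (fun p _ q _ hpq => Nat.add_right_cancel hpq)
  simp only [Finset.coe_filter, Finset.mem_range, Set.mem_ofPred_eq] at hp ⊢
  obtain ⟨-, hlen, hocc⟩ := hp
  simp only [List.length_append] at hlen
  refine ⟨by omega, by omega, ?_⟩
  rw [← List.drop_drop, ← List.take_append_drop (s ++ S ++ t).length (X.drop p), hocc]
  simp

lemma exists_isMEM_of_le_occCount_strSub_self [DecidableEq α] {f : ℕ} {Q X : List α} {a : ℕ}
    (ha : a < Q.length) (hfreq : f ≤ occCount (strSub Q a a) X) :
    ∃ i' j', IsMEM f Q X i' j' ∧ i' ≤ a ∧ a ≤ j' := by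
  obtain ⟨j', haj', hj'N, hfj', hright⟩ := Nat.exists_le_maximal_of_le
    (p := fun t => f ≤ occCount (strSub Q a t) X) (Nat.le_sub_one_of_lt ha) hfreq
  obtain ⟨i', hi'a, hfi', hleft⟩ := Nat.exists_le_minimal
    (p := fun t => f ≤ occCount (strSub Q t j') X) hfj'
  refine ⟨i', j', ⟨by omega, by omega, hfi', hleft.imp_right not_le.mp, ?_⟩, hi'a, haj'⟩
  refine hright.imp (by omega) fun hlt => ?_
  exact (occCount_le_occCount_of_isInfix X (strSub_isInfix_strSub Q hi'a le_rfl)).trans_lt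
    (not_le.mp hlt)

variable (w : ℕ) (h : List α → Bool) (S : List α)

lemma length_pfpStarts : (pfpStarts w h S).length = (PFP w h S).length := by
  simp [PFP, pfpStarts, pfpEnds]

lemma length_pfpEnds : (pfpEnds w h S).length = (PFP w h S).length := by
  simp [PFP, pfpStarts, pfpEnds]

lemma pairwise_le_pfpStarts : (pfpStarts w h S).Pairwise (· ≤ ·) :=
  .cons (by simp) ((List.pairwise_lt_range.filter _).map _ fun _ _ _ => by omega)

lemma pairwise_le_pfpEnds : (pfpEnds w h S).Pairwise (· ≤ ·) := by
  refine List.pairwise_append.mpr ⟨(List.pairwise_lt_range.filter _).imp le_of_lt, by simp, ?_⟩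
  intro q hq _ hS
  rw [List.mem_singleton.mp hS]
  exact Nat.le_of_lt_succ (List.mem_range.mp (List.mem_of_mem_filter hq))

variable {w h S}

lemma pfpStart_le_pfpStart {k k' : ℕ} (hk : k ≤ k') (hk' : k' < (PFP w h S).length) :
    pfpStart w h S k ≤ pfpStart w h S k' :=
  (pairwise_le_pfpStarts w h S).getD_le_getD 0 hk (by rwa [length_pfpStarts])

lemma pfpEnd_le_pfpEnd {k k' : ℕ} (hk : k ≤ k') (hk' : k' < (PFP w h S).length) :
    pfpEnd w h S k ≤ pfpEnd w h S k' :=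
  (pairwise_le_pfpEnds w h S).getD_le_getD 0 hk (by rwa [length_pfpEnds])

end

theorem inside_one_frequent_phrase_general {α : Type*} [DecidableEq α] (w f : ℕ)
    (h : List α → Bool) (P T : List α)
    (i j a : ℕ) (ha : a < (PFP w h P).length)
    (hin1 : pfpStart w h P a ≤ i) (hin2 : j < pfpEnd w h P a)
    (hfreq : f ≤ occCount [(PFP w h P).getD a []] (PFP w h T)) :
    ∃ i' j', IsMEM f (PFP w h P) (PFP w h T) i' j' ∧ i' ≤ a ∧ a ≤ j' ∧
      pfpStart w h P (i' - 1) ≤ i ∧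
      j + 1 ≤ pfpEnd w h P (min (j' + 1) ((PFP w h P).length - 1)) := by
  obtain ⟨i', j', hmem', hi'a, haj'⟩ :=
    exists_isMEM_of_le_occCount_strSub_self ha ((strSub_self _ [] ha).symm ▸ hfreq)
  have hj'N : j' < (PFP w h P).length := hmem'.2.1
  exact ⟨i', j', hmem', hi'a, haj', (pfpStart_le_pfpStart (by omega) ha).trans hin1,
    hin2.trans_le (pfpEnd_le_pfpEnd (by omega) (by omega))⟩

/-- Let `P[i..j]` (0-indexed) be an `f`-MEM of `P` with respect to `T`
that contains no complete phrase of `PFP(P)` and is contained within a single phrase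
`PFP(P)[a]` that occurs at least `f` times in `PFP(T)`. Then `PFP(P)[a]` is part of an
`f`-MEM of `PFP(P)` with respect to `PFP(T)`, and `P[i..j]` is contained in the
pseudo-MEM corresponding to the phrase sequence in `S₁` arising from that `f`-MEM of
the parse. -/
theorem inside_one_frequent_phrase {α : Type*} [DecidableEq α] (w f : ℕ) (hw : 1 ≤ w)
    (hf : 1 ≤ f) (h : List α → Bool) (P T : List α)
    (hN : 2 ≤ (PFP w h P).length)
    (i j a : ℕ) (hmem : IsMEM f P T i j) (ha : a < (PFP w h P).length)
    (hin1 : pfpStart w h P a ≤ i) (hin2 : j < pfpEnd w h P a)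
    (hnophrase : ∀ c, c < (PFP w h P).length →
      ¬ (i ≤ pfpStart w h P c ∧ pfpEnd w h P c ≤ j + 1))
    (hfreq : f ≤ occCount [(PFP w h P).getD a []] (PFP w h T)) :
    ∃ i' j', IsMEM f (PFP w h P) (PFP w h T) i' j' ∧ i' ≤ a ∧ a ≤ j' ∧
      pfpStart w h P (i' - 1) ≤ i ∧
      j + 1 ≤ pfpEnd w h P (min (j' + 1) ((PFP w h P).length - 1)) :=
  inside_one_frequent_phrase_general w f h P T i j a ha hin1 hin2 hfreq
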